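/- Let (v_1,…,v_n) be an arbitrary valuation profile with m > n and 0 ≤ m|_n ≤ 1. Suppose that: m|_n of the agents have valuation functions that are both ⟨⌊m/n⌋−1, ⌊m/n⌋⟩-size monotonic and ⟨⌊m/n⌋, ⌊m/n⌋+1⟩-set monotonic; a different (disjoint) set of n−1−m|_n agents have ⟨⌊m/n⌋−1, ⌊m/n⌋⟩-size monotonic valuation functions; and the remaining agent has a ⟨⌊m/n⌋−1, ⌊m/n⌋⟩-set monotonic valuation function. Then an EFX allocation exists at (v_1,…,v_n). -/

import Mathlib

open Finset

/-- A valuation `v` on subsets of `E` is set monotonic if larger sets (by inclusion)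
have larger value. -/
def SetMonotonic {α : Type*} (E : Finset α) (v : Finset α → ℝ) : Prop :=
  ∀ X Y : Finset α, X ⊆ Y → Y ⊆ E → v X ≤ v Y

/-- `⟨k,l⟩`-set monotonicity: monotone along inclusions whose cardinalities lie in `[k,l]`. -/
def SetMonotonicKL {α : Type*} (E : Finset α) (k l : ℕ) (v : Finset α → ℝ) : Prop :=
  ∀ X Y : Finset α, X ⊆ Y → Y ⊆ E → k ≤ X.card → X.card < Y.card → Y.card ≤ l → v X ≤ v Y

/-- `⟨k,l⟩`-size monotonicity: any set of strictly larger cardinality (within `[k,l]`)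
has larger value. -/
def SizeMonotonic {α : Type*} (E : Finset α) (k l : ℕ) (v : Finset α → ℝ) : Prop :=
  ∀ X Y : Finset α, X ⊆ E → Y ⊆ E → X ≠ Y →
    k ≤ X.card → X.card < Y.card → Y.card ≤ l → v X ≤ v Y

/-- An allocation of the goods `E` among `n` agents: pairwise disjoint bundles
whose union is `E`. -/
def IsAllocation {α : Type*} [DecidableEq α] (E : Finset α) {n : ℕ}
    (X : Fin n → Finset α) : Prop :=
  (∀ i, X i ⊆ E) ∧ (∀ i j : Fin n, i ≠ j → Disjoint (X i) (X j)) ∧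
    Finset.univ.biUnion X = E

/-- `X E_v Y` : `X` is envy-free from `Y` up to any one item at valuation `v`. -/
def EFXpref {α : Type*} [DecidableEq α] (v : Finset α → ℝ) (X Y : Finset α) : Prop :=
  ∀ y ∈ Y, v (Y.erase y) ≤ v X

/-- An allocation is EFX at a profile `v` if every agent is envy-free up to any one good
from every other agent's bundle. -/
def IsEFX {α : Type*} [DecidableEq α] {n : ℕ} (v : Fin n → Finset α → ℝ)
    (X : Fin n → Finset α) : Prop :=
  ∀ i j : Fin n, EFXpref (v i) (X i) (X j)


/-! Write `q = ⌊m/n⌋` and `r = m mod n ∈ {0, 1}`. The agent `i₀` outside `A ∪ B` chooses first,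
then the other agents in turn, ending with an agent `z ∈ A ∪ B` taken in `A` when `r = 1`: every
agent but `z` takes a favourite `q`-subset of the goods still available, and `z` gets the `q + r`
leftover goods. Removing a good from a `q`-bundle leaves `q - 1` goods, which size monotonicity
(for the agents of `A ∪ B`) or set monotonicity together with `i₀`'s free choice among all of `E`
rank below the agent's own bundle. Removing a good from the `(q + 1)`-bundle of `z` leaves a
`q`-set that every other agent could have picked instead, and that `z` ranks below its own bundle
by set monotonicity. -/
section Preference

variable {α : Type*} {E : Finset α} {v : Finset α → ℝ} {k l q : ℕ} {X Y : Finset α}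

theorem SetMonotonicKL.le_of_subset (hv : SetMonotonicKL E k l v) (hXY : X ⊆ Y) (hY : Y ⊆ E)
    (hk : k ≤ X.card) (hl : Y.card ≤ l) : v X ≤ v Y := by
  rcases (card_le_card hXY).lt_or_eq with hlt | heq
  · exact hv X Y hXY hY hk hlt hl
  · rw [eq_of_subset_of_card_le hXY heq.ge]

variable [DecidableEq α]

theorem EFXpref.of_le {X' : Finset α} (h : EFXpref v X Y) (hle : v X ≤ v X') :
    EFXpref v X' Y :=
  fun y hy => (h y hy).trans hle

theorem efxPref_of_sizeMonotonic (hv : SizeMonotonic E (q - 1) q v) (hX : X ⊆ E) (hY : Y ⊆ E)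
    (hXq : X.card = q) (hYq : Y.card = q) : EFXpref v X Y := by
  intro y hy
  have hcard : (Y.erase y).card = q - 1 := by rw [card_erase_of_mem hy, hYq]
  have hq : 0 < q := hYq ▸ card_pos.mpr ⟨y, hy⟩
  exact hv _ X ((erase_subset y Y).trans hY) hX (fun h => by rw [h] at hcard; omega)
    hcard.ge (by omega) hXq.le

theorem efxPref_of_sizeMonotonic_of_setMonotonicKL (hsize : SizeMonotonic E (q - 1) q v)
    (hset : SetMonotonicKL E q (q + 1) v) (hX : X ⊆ E) (hY : Y ⊆ E) (hXq : X.card = q + 1)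
    (hYq : Y.card = q) : EFXpref v X Y := by
  obtain ⟨S, hSX, hSq⟩ := exists_subset_card_eq (show q ≤ X.card by omega)
  exact (efxPref_of_sizeMonotonic hsize (hSX.trans hX) hY hSq hYq).of_le
    (hset.le_of_subset hSX hX hSq.ge hXq.le)

theorem efxPref_self_of_setMonotonicKL (hv : SetMonotonicKL E q (q + 1) v) (hX : X ⊆ E)
    (hXq : X.card = q + 1) : EFXpref v X X := fun x hx =>
  hv.le_of_subset (erase_subset x X) hX (by rw [card_erase_of_mem hx, hXq]; rfl) hXq.le

theorem efxPref_of_forall_le {P : Finset α} (hmax : ∀ T ⊆ P, T.card = q → v T ≤ v X)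
    (hY : Y ⊆ P) (hYq : Y.card = q + 1) : EFXpref v X Y := fun y hy =>
  hmax _ ((erase_subset y Y).trans hY) (by rw [card_erase_of_mem hy, hYq]; rfl)

theorem efxPref_of_forall_le_of_setMonotonicKL (hv : SetMonotonicKL E (q - 1) q v)
    (hmax : ∀ T ⊆ E, T.card = q → v T ≤ v X) (hY : Y ⊆ E) (hYq : Y.card = q) :
    EFXpref v X Y := by
  intro y hy
  have hcard : (Y.erase y).card = q - 1 := by rw [card_erase_of_mem hy, hYq]
  obtain ⟨T, hyT, hTE, hTq⟩ := exists_subsuperset_card_eq ((erase_subset y Y).trans hY)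
    (by omega) (hYq ▸ card_le_card hY)
  exact (hv.le_of_subset hyT hTE hcard.ge hTq.le).trans (hmax T hTE hTq)

end Preference

section Allocation

variable {ι α : Type*}

theorem exists_best_subset_card_eq {q : ℕ} {P : Finset α} (w : Finset α → ℝ)
    (h : q ≤ P.card) : ∃ S ⊆ P, S.card = q ∧ ∀ T ⊆ P, T.card = q → w T ≤ w S := by
  obtain ⟨S, hS, hmax⟩ := exists_max_image (P.powersetCard q) w (powersetCard_nonempty.mpr h)
  rw [mem_powersetCard] at hS
  exact ⟨S, hS.1, hS.2, fun T hT hTq => hmax T (mem_powersetCard.mpr ⟨hT, hTq⟩)⟩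

variable [DecidableEq α]

def IsAllocationOn (s : Finset ι) (P : Finset α) (X : ι → Finset α) : Prop :=
  (s : Set ι).PairwiseDisjoint X ∧ s.biUnion X = P

theorem IsAllocationOn.subset {s : Finset ι} {P : Finset α} {X : ι → Finset α} {i : ι}
    (h : IsAllocationOn s P X) (hi : i ∈ s) : X i ⊆ P :=
  h.2 ▸ subset_biUnion_of_mem X hi

theorem IsAllocationOn.update_insert [DecidableEq ι] {s : Finset ι} {P S : Finset α}
    {X : ι → Finset α} {a : ι} (h : IsAllocationOn s (P \ S) X) (ha : a ∉ s) (hS : S ⊆ P) :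
    IsAllocationOn (insert a s) P (Function.update X a S) := by
  have hX : ∀ i ∈ s, Function.update X a S i = X i := fun i hi =>
    Function.update_of_ne (ne_of_mem_of_not_mem hi ha) _ _
  constructor
  · rw [coe_insert]
    refine Set.PairwiseDisjoint.insert_of_notMem ?_ ha fun j hj => ?_
    · intro i hi j hj hij
      simpa only [Function.onFun, hX i hi, hX j hj] using h.1 hi hj hij
    · rw [Function.update_self, hX j hj]
      exact disjoint_sdiff.mono_right (h.subset hj)
  · rw [biUnion_insert, Function.update_self, biUnion_congr rfl hX, h.2,
      union_sdiff_of_subset hS]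

theorem IsAllocationOn.isAllocation {n : ℕ} {E : Finset α} {X : Fin n → Finset α}
    (h : IsAllocationOn univ E X) : IsAllocation E X :=
  ⟨fun _ => h.subset (mem_univ _), fun _ _ hij => h.1 (mem_univ _) (mem_univ _) hij, h.2⟩

theorem exists_serial_picking [DecidableEq ι] (v : ι → Finset α → ℝ) (q : ℕ) (z : ι)
    (s : Finset ι) (hz : z ∉ s) (P : Finset α) (hP : s.card * q ≤ P.card) :
    ∃ X : ι → Finset α, IsAllocationOn (insert z s) P X ∧ (X z).card + s.card * q = P.card ∧
      ∀ a ∈ s, (X a).card = q ∧ ∀ T ⊆ X z, T.card = q → v a T ≤ v a (X a) := by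
  induction s using Finset.induction_on generalizing P with
  | empty => exact ⟨fun _ => P, ⟨by simp, by simp⟩, by simp, by simp⟩
  | insert a s ha ih =>
    have hza : z ≠ a := fun h => hz (h ▸ mem_insert_self a s)
    rw [card_insert_of_notMem ha, Nat.succ_mul] at hP ⊢
    obtain ⟨S, hSP, hSq, hSmax⟩ := exists_best_subset_card_eq (v a) (show q ≤ P.card by omega)
    obtain ⟨X, hX, hXz, hXs⟩ := ih (fun h => hz (mem_insert_of_mem h)) (P \ S)
      (by rw [card_sdiff_of_subset hSP]; omega)
    have hzS : X z ⊆ P := (hX.subset (mem_insert_self z s)).trans sdiff_subset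
    refine ⟨Function.update X a S, ?_, ?_, fun b hb => ?_⟩
    · rw [insert_comm]
      exact hX.update_insert (by simp [hza.symm, ha]) hSP
    · rw [Function.update_of_ne hza]
      rw [card_sdiff_of_subset hSP] at hXz
      omega
    · rcases mem_insert.mp hb with rfl | hb
      · simp only [Function.update_self, Function.update_of_ne hza]
        exact ⟨hSq, fun T hT hTq => hSmax T (hT.trans hzS) hTq⟩
      · simpa only [Function.update_of_ne (ne_of_mem_of_not_mem hb ha),
          Function.update_of_ne hza] using hXs b hb

theorem exists_serial_picking_univ [Fintype ι] [DecidableEq ι] (v : ι → Finset α → ℝ)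
    (q : ℕ) {i₀ z : ι} (hz : z ≠ i₀) (E : Finset α) (hE : (Fintype.card ι - 1) * q ≤ E.card) :
    ∃ X : ι → Finset α, IsAllocationOn univ E X ∧ (∀ j ≠ z, (X j).card = q) ∧
      (X z).card + (Fintype.card ι - 1) * q = E.card ∧
      (∀ T ⊆ E, T.card = q → v i₀ T ≤ v i₀ (X i₀)) ∧
      ∀ i ≠ i₀, i ≠ z → ∀ T ⊆ X z, T.card = q → v i T ≤ v i (X i) := by
  set s := (univ.erase i₀).erase z
  have hzs : z ∈ univ.erase i₀ := mem_erase.mpr ⟨hz, mem_univ z⟩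
  have hs : s.card + 1 = Fintype.card ι - 1 := by
    rw [card_erase_add_one hzs, card_erase_of_mem (mem_univ _), card_univ]
  rw [← hs, Nat.succ_mul] at hE ⊢
  obtain ⟨S, hSE, hSq, hSmax⟩ := exists_best_subset_card_eq (P := E) (v i₀)
    (show q ≤ E.card by omega)
  obtain ⟨X, hX, hXz, hXs⟩ := exists_serial_picking v q z s (notMem_erase z _) (E \ S)
    (by rw [card_sdiff_of_subset hSE]; omega)
  have hall := hX.update_insert (a := i₀) (by simp [s, hz.symm]) hSE
  rw [insert_erase hzs, insert_erase (mem_univ i₀)] at hall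
  have hmid : ∀ i ≠ i₀, i ≠ z → i ∈ s := fun i h₀ hz =>
    mem_erase.mpr ⟨hz, mem_erase.mpr ⟨h₀, mem_univ i⟩⟩
  refine ⟨_, hall, fun j hj => ?_, ?_, by rwa [Function.update_self], fun i h₀ hiz => ?_⟩
  · by_cases hj₀ : j = i₀
    · rwa [hj₀, Function.update_self]
    · rw [Function.update_of_ne hj₀]
      exact (hXs j (hmid j hj₀ hj)).1
  · rw [Function.update_of_ne hz]
    rw [card_sdiff_of_subset hSE] at hXz
    omega
  · rw [Function.update_of_ne hz, Function.update_of_ne h₀]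
    exact (hXs i (hmid i h₀ hiz)).2

end Allocation

theorem isEFX_of_serial_picking {α : Type*} [DecidableEq α] {n q : ℕ} {E : Finset α}
    {v : Fin n → Finset α → ℝ} {X : Fin n → Finset α} {i₀ z : Fin n} (hXE : ∀ i, X i ⊆ E)
    (hcard : ∀ j ≠ z, (X j).card = q) (hzcard : (X z).card = q ∨ (X z).card = q + 1)
    (hfirst : SetMonotonicKL E (q - 1) q (v i₀))
    (hmax₀ : ∀ T ⊆ E, T.card = q → v i₀ T ≤ v i₀ (X i₀))
    (hsz : ∀ i ≠ i₀, SizeMonotonic E (q - 1) q (v i))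
    (hmid : ∀ i ≠ i₀, i ≠ z → ∀ T ⊆ X z, T.card = q → v i T ≤ v i (X i))
    (hlast : (X z).card = q + 1 → SetMonotonicKL E q (q + 1) (v z)) : IsEFX v X := by
  have hsize : ∀ j, (X j).card = q ∨ j = z ∧ (X j).card = q + 1 := fun j => by
    by_cases hj : j = z
    · subst hj; tauto
    · exact Or.inl (hcard j hj)
  intro i j
  by_cases hi₀ : i = i₀
  · subst hi₀
    rcases hsize j with hj | ⟨-, hj⟩
    · exact efxPref_of_forall_le_of_setMonotonicKL hfirst hmax₀ (hXE j) hj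
    · exact efxPref_of_forall_le hmax₀ (hXE j) hj
  have hv := hsz i hi₀
  rcases hsize i with hi | ⟨rfl, hi⟩
  · rcases hsize j with hj | ⟨rfl, hj⟩
    · exact efxPref_of_sizeMonotonic hv (hXE i) (hXE j) hi hj
    · exact efxPref_of_forall_le (hmid i hi₀ (by rintro rfl; omega)) subset_rfl hj
  · rcases hsize j with hj | ⟨rfl, -⟩
    · exact efxPref_of_sizeMonotonic_of_setMonotonicKL hv (hlast hi) (hXE _) (hXE j) hi hj
    · exact efxPref_self_of_setMonotonicKL (hlast hi) (hXE _) hi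

theorem exists_first_and_last_agent {n r : ℕ} (hn : 2 ≤ n) (hr : r ≤ 1)
    {A B : Finset (Fin n)} (hAB : Disjoint A B) (hA : A.card = r) (hB : B.card = n - 1 - r) :
    ∃ i₀ z, i₀ ∉ A ∪ B ∧ (∀ i ≠ i₀, i ∈ A ∪ B) ∧ z ≠ i₀ ∧ (r = 1 → z ∈ A) := by
  obtain ⟨i₀, hi₀⟩ := card_eq_one.mp (show (A ∪ B)ᶜ.card = 1 by
    rw [card_compl, card_union_of_disjoint hAB, Fintype.card_fin]; omega)
  have hmem : ∀ i, i ∉ A ∪ B ↔ i = i₀ := fun i => by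
    rw [← mem_compl, hi₀, mem_singleton]
  obtain ⟨z, hzAB, hzA⟩ : ∃ z ∈ A ∪ B, r = 1 → z ∈ A := by
    rcases Nat.le_one_iff_eq_zero_or_eq_one.mp hr with rfl | rfl
    · obtain ⟨z, hz⟩ := card_pos.mp (show 0 < B.card by omega)
      exact ⟨z, mem_union_right A hz, by simp⟩
    · obtain ⟨z, hz⟩ := card_pos.mp (show 0 < A.card by omega)
      exact ⟨z, mem_union_left B hz, fun _ => hz⟩
  exact ⟨i₀, z, (hmem i₀).mpr rfl, fun i hi => not_not.mp (mt (hmem i).mp hi),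
    fun h => (hmem z).mpr h hzAB, hzA⟩

theorem efx_exists_relaxed_i_general {α : Type*} [DecidableEq α] (n m : ℕ)
    (hn : 2 ≤ n) (E : Finset α) (hE : E.card = m)
    (hr : m % n ≤ 1)
    (v : Fin n → Finset α → ℝ)
    (A B : Finset (Fin n)) (hAB : Disjoint A B)
    (hAcard : A.card = m % n) (hBcard : B.card = n - 1 - m % n)
    (hA : ∀ i ∈ A, SizeMonotonic E (m / n - 1) (m / n) (v i) ∧
      SetMonotonicKL E (m / n) (m / n + 1) (v i))
    (hB : ∀ i ∈ B, SizeMonotonic E (m / n - 1) (m / n) (v i))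
    (hrest : ∀ i : Fin n, i ∉ A ∪ B → SetMonotonicKL E (m / n - 1) (m / n) (v i)) :
    ∃ X : Fin n → Finset α, IsAllocation E X ∧ IsEFX v X := by
  have hm : n * (m / n) + m % n = m := Nat.div_add_mod m n
  generalize m / n = q at *
  obtain ⟨i₀, z, hi₀, hAB', hz, hzA⟩ := exists_first_and_last_agent hn hr hAB hAcard hBcard
  have hn1 : (n - 1) * q + q = n * q := by
    rw [← Nat.succ_mul, Nat.succ_eq_add_one, Nat.sub_add_cancel (by omega)]
  obtain ⟨X, hX, hcard, hXz, hmax₀, hmax⟩ :=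
    exists_serial_picking_univ v q hz E (by rw [Fintype.card_fin]; omega)
  rw [Fintype.card_fin] at hXz
  refine ⟨X, hX.isAllocation, isEFX_of_serial_picking (fun i => hX.subset (mem_univ i))
    hcard (by omega) (hrest i₀ hi₀) hmax₀ (fun i hi => ?_) hmax
    fun hz1 => (hA z (hzA (by omega))).2⟩
  exact (mem_union.mp (hAB' i hi)).elim (fun h => (hA i h).1) (hB i)

/-- Theorem 4(i): arbitrary valuation profile, `m > n`, `m mod n ≤ 1`.
If `m mod n` agents have valuations that are both `⟨⌊m/n⌋-1, ⌊m/n⌋⟩`-size monotonic and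
`⟨⌊m/n⌋, ⌊m/n⌋+1⟩`-set monotonic, a disjoint set of `n - 1 - m mod n` agents have
`⟨⌊m/n⌋-1, ⌊m/n⌋⟩`-size monotonic valuations, and the remaining agent has a
`⟨⌊m/n⌋-1, ⌊m/n⌋⟩`-set monotonic valuation, then an EFX allocation exists. -/
theorem efx_exists_relaxed_i {α : Type*} [DecidableEq α] (n m : ℕ)
    (hn : 2 ≤ n) (E : Finset α) (hE : E.card = m) (hmn : n < m)
    (hr : m % n ≤ 1)
    (v : Fin n → Finset α → ℝ)
    (A B : Finset (Fin n)) (hAB : Disjoint A B)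
    (hAcard : A.card = m % n) (hBcard : B.card = n - 1 - m % n)
    (hA : ∀ i ∈ A, SizeMonotonic E (m / n - 1) (m / n) (v i) ∧
      SetMonotonicKL E (m / n) (m / n + 1) (v i))
    (hB : ∀ i ∈ B, SizeMonotonic E (m / n - 1) (m / n) (v i))
    (hrest : ∀ i : Fin n, i ∉ A ∪ B → SetMonotonicKL E (m / n - 1) (m / n) (v i)) :
    ∃ X : Fin n → Finset α, IsAllocation E X ∧ IsEFX v X :=
  efx_exists_relaxed_i_general n m hn E hE hr v A B hAB hAcard hBcard hA hB hrest
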